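/- arXiv:2112.00393 — 2 statements merged into one kernel-verified Lean document; each statement's English description precedes it below -/
import Mathlib

section
/- (Gronwall inequality on the plane) Let M ≥ 0 and let f, g : [0,1]² → ℝ be continuous with f(s,t) ≤ g(s,t) + M ∫₀^s ∫₀^t f(ξ,ζ) dζ dξ for all (s,t) ∈ [0,1]², where f is nonnegative. Then f(s,t) ≤ g(s,t) + M ∫₀^s ∫₀^t g(ξ,ζ) · I₀(2√(M(s-ξ)(t-ζ))) dζ dξ for all (s,t), where I₀ is the modified Bessel function of order zero. In particular, if g is constant equal to K ≥ 0, then sup_{(s,t)∈[0,1]²} f(s,t) ≤ K(1 + M·I₀(2√M)). -/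
noncomputable def besselI0 (z : ℝ) : ℝ :=
  ∑' k : ℕ, (z / 2) ^ (2 * k) / ((k.factorial : ℝ)) ^ 2

/-!
Work on `ℝ × ℝ` with its product order, so that `Icc 0 p` is the rectangle `[0, p₁] × [0, p₂]`,
and let `C₀(x) = ∑ xᵏ / (k!)²` be the Bessel–Clifford function, so that `I₀(2√x) = C₀(x)`.
Integrating the series termwise gives
`M ∫_{[q,p]} C₀(M (r₁ - q₁)(r₂ - q₂)) dr = C₀(M (p₁ - q₁)(p₂ - q₂)) - 1`; together with
Dirichlet's formula `∫_{[0,p]} ∫_{[0,r]} = ∫_{[0,p]} ∫_{[q,p]}` this shows that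
`w(p) = g(p) + M ∫_{[0,p]} C₀(M (p₁ - q₁)(p₂ - q₂)) g(q) dq` solves `w = g + M ∫_{[0,p]} w`.
Hence `u = f - w` satisfies `u ≤ M ∫_{[0,p]} u`; iterating this from the bound `u ≤ M ‖u‖₁`
gives `u(p) ≤ M ‖u‖₁ (M p₁ p₂)ⁿ / (n!)²` for every `n`, so `u ≤ 0`.
-/

open MeasureTheory Set Filter Topology Nat

noncomputable def besselClifford (x : ℝ) : ℝ := ∑' k : ℕ, x ^ k / (k ! : ℝ) ^ 2

lemma norm_pow_div_factorial_sq_le (x : ℝ) (k : ℕ) :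
    ‖x ^ k / (k ! : ℝ) ^ 2‖ ≤ |x| ^ k / k ! := by
  have h1 : (1 : ℝ) ≤ k ! := mod_cast k.factorial_pos
  rw [norm_div, norm_pow, Real.norm_eq_abs, Real.norm_of_nonneg (by positivity)]
  gcongr
  nlinarith

lemma summable_pow_div_factorial_sq (x : ℝ) : Summable fun k : ℕ => x ^ k / (k ! : ℝ) ^ 2 :=
  .of_norm_bounded (Real.summable_pow_div_factorial |x|) (norm_pow_div_factorial_sq_le x)

lemma hasSum_besselClifford (x : ℝ) :
    HasSum (fun k : ℕ => x ^ k / (k ! : ℝ) ^ 2) (besselClifford x) :=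
  (summable_pow_div_factorial_sq x).hasSum

lemma besselI0_two_mul_sqrt {x : ℝ} (hx : 0 ≤ x) : besselI0 (2 * √x) = besselClifford x := by
  simp only [besselI0, besselClifford, pow_mul, mul_div_cancel_left₀ (√x) two_ne_zero,
    Real.sq_sqrt hx]

lemma besselClifford_nonneg {x : ℝ} (hx : 0 ≤ x) : 0 ≤ besselClifford x :=
  tsum_nonneg fun _ => by positivity

lemma monotoneOn_besselClifford : MonotoneOn besselClifford (Ici 0) := fun x hx y _ hxy =>
  (summable_pow_div_factorial_sq x).tsum_le_tsum (fun k => by gcongr)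
    (summable_pow_div_factorial_sq y)

lemma continuous_besselClifford : Continuous besselClifford := by
  refine continuous_iff_continuousAt.2 fun x => ?_
  have hmem : Icc (-(|x| + 1)) (|x| + 1) ∈ 𝓝 x :=
    Icc_mem_nhds (by linarith [neg_abs_le x]) (by linarith [le_abs_self x])
  refine (continuousOn_tsum (fun k => by fun_prop) (Real.summable_pow_div_factorial (|x| + 1))
    fun k y hy => (norm_pow_div_factorial_sq_le y k).trans ?_).continuousAt hmem
  gcongr
  exact abs_le.2 hy

lemma setIntegral_Icc_eq_intervalIntegral {F : ℝ × ℝ → ℝ} {a b : ℝ × ℝ} (hab : a ≤ b)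
    (hF : IntegrableOn F (Icc a b)) :
    ∫ q in Icc a b, F q = ∫ x in a.1..b.1, ∫ y in a.2..b.2, F (x, y) := by
  rw [Icc_prod_eq] at hF ⊢
  rw [Measure.volume_eq_prod, setIntegral_prod F hF, intervalIntegral.integral_of_le hab.1,
    ← integral_Icc_eq_integral_Ioc]
  refine setIntegral_congr_fun measurableSet_Icc fun x _ => ?_
  rw [intervalIntegral.integral_of_le hab.2, integral_Icc_eq_integral_Ioc]

lemma setIntegral_Icc_mul_sub_pow {a b : ℝ × ℝ} (hab : a ≤ b) (n : ℕ) :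
    ∫ r in Icc a b, ((r.1 - a.1) * (r.2 - a.2)) ^ n
      = ((b.1 - a.1) * (b.2 - a.2)) ^ (n + 1) / (n + 1) ^ 2 := by
  rw [setIntegral_Icc_eq_intervalIntegral hab
    (Continuous.continuousOn (by fun_prop) |>.integrableOn_compact isCompact_Icc)]
  simp only [mul_pow, intervalIntegral.integral_const_mul, intervalIntegral.integral_mul_const,
    intervalIntegral.integral_comp_sub_right fun x => x ^ n, sub_self, integral_pow]
  field_simp
  ring

lemma hasSum_setIntegral_Icc_besselClifford (c : ℝ) {a b : ℝ × ℝ} (hab : a ≤ b) :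
    HasSum
      (fun k : ℕ => c ^ k / (k ! : ℝ) ^ 2 * (((b.1 - a.1) * (b.2 - a.2)) ^ (k + 1) / (k + 1) ^ 2))
      (∫ r in Icc a b, besselClifford (c * ((r.1 - a.1) * (r.2 - a.2)))) := by
  have hA : ∀ r ∈ Icc a b, |(r.1 - a.1) * (r.2 - a.2)| ≤ (b.1 - a.1) * (b.2 - a.2) :=
    fun r hr => by
      have h1 := sub_nonneg.2 hr.1.1; have h2 := sub_nonneg.2 hr.1.2
      rw [abs_of_nonneg (by positivity)]
      gcongr <;> linarith [hr.2.1, hr.2.2]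
  have hterm : ∀ k : ℕ, ∫ r in Icc a b, (c * ((r.1 - a.1) * (r.2 - a.2))) ^ k / (k ! : ℝ) ^ 2
      = c ^ k / (k ! : ℝ) ^ 2 * (((b.1 - a.1) * (b.2 - a.2)) ^ (k + 1) / (k + 1) ^ 2) := by
    intro k
    simp_rw [mul_pow c, integral_div, integral_const_mul, setIntegral_Icc_mul_sub_pow hab]
    field_simp
  simp_rw [← hterm]
  refine hasSum_integral_of_dominated_convergence
    (fun k _ => (|c| * ((b.1 - a.1) * (b.2 - a.2))) ^ k / (k ! : ℝ) ^ 2)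
    (fun k => (Continuous.aestronglyMeasurable (by fun_prop))) (fun k => ?_)
    (.of_forall fun _ => summable_pow_div_factorial_sq _)
    (integrableOn_const (isCompact_Icc.measure_lt_top.ne))
    (.of_forall fun r => hasSum_besselClifford _)
  refine (ae_restrict_iff' measurableSet_Icc).2 (.of_forall fun r hr => ?_)
  rw [norm_div, norm_pow, norm_mul, Real.norm_eq_abs, Real.norm_eq_abs,
    Real.norm_of_nonneg (by positivity)]
  gcongr
  exact hA r hr

lemma mul_setIntegral_Icc_besselClifford (c : ℝ) {a b : ℝ × ℝ} (hab : a ≤ b) :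
    c * ∫ r in Icc a b, besselClifford (c * ((r.1 - a.1) * (r.2 - a.2)))
      = besselClifford (c * ((b.1 - a.1) * (b.2 - a.2))) - 1 := by
  have hshift : ∀ (d : ℝ) (k : ℕ), c * (c ^ k / (k ! : ℝ) ^ 2 * (d ^ (k + 1) / (k + 1) ^ 2))
      = (c * d) ^ (k + 1) / ((k + 1) ! : ℝ) ^ 2 := fun d k => by
    rw [Nat.factorial_succ]
    push_cast
    field_simp
    ring
  have h := (hasSum_setIntegral_Icc_besselClifford c hab).mul_left c
  simp_rw [hshift] at h
  simpa [eq_sub_iff_add_eq] using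
    h.unique ((hasSum_nat_add_iff' 1).2 (hasSum_besselClifford _))

section OrderIntervalSwap

variable {α : Type*} [MeasurableSpace α] [TopologicalSpace α] [PartialOrder α]
  [OrderClosedTopology α] [OpensMeasurableSpace α] {μ : Measure α} {a b : α} {F : α → α → ℝ}

lemma integrable_indicator_snd_le_fst [SecondCountableTopology α] [SFinite μ]
    (hF : IntegrableOn (Function.uncurry F) (Icc a b ×ˢ Icc a b) (μ.prod μ)) :
    Integrable ({z : α × α | z.2 ≤ z.1}.indicator (Function.uncurry F))
      ((μ.restrict (Icc a b)).prod (μ.restrict (Icc a b))) := by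
  rw [Measure.prod_restrict]
  exact hF.indicator (measurableSet_le measurable_snd measurable_fst)

lemma setIntegral_Icc_indicator_le_right {p : α} (hp : p ∈ Icc a b) :
    ∫ q in Icc a b, {z : α × α | z.2 ≤ z.1}.indicator (Function.uncurry F) (p, q) ∂μ
      = ∫ q in Icc a p, F p q ∂μ := by
  have hIic : Iic p ∩ Icc a b = Icc a p := by
    ext q
    exact ⟨fun ⟨h, h'⟩ => ⟨h'.1, h⟩, fun h => ⟨h.2, h.1, h.2.trans hp.2⟩⟩
  have hslice : (fun q => {z : α × α | z.2 ≤ z.1}.indicator (Function.uncurry F) (p, q))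
      = (Iic p).indicator (F p) := by
    ext q
    by_cases h : q ≤ p <;> simp [indicator, h]
  rw [hslice, integral_indicator measurableSet_Iic, Measure.restrict_restrict measurableSet_Iic,
    hIic]

lemma setIntegral_Icc_indicator_le_left {q : α} (hq : q ∈ Icc a b) :
    ∫ p in Icc a b, {z : α × α | z.2 ≤ z.1}.indicator (Function.uncurry F) (p, q) ∂μ
      = ∫ p in Icc q b, F p q ∂μ := by
  have hIci : Ici q ∩ Icc a b = Icc q b := by
    ext p
    exact ⟨fun ⟨h, h'⟩ => ⟨h, h'.2⟩, fun h => ⟨h.1, hq.1.trans h.1, h.2⟩⟩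
  have hslice : (fun p => {z : α × α | z.2 ≤ z.1}.indicator (Function.uncurry F) (p, q))
      = (Ici q).indicator (F · q) := by
    ext p
    by_cases h : q ≤ p <;> simp [indicator, h]
  rw [hslice, integral_indicator measurableSet_Ici, Measure.restrict_restrict measurableSet_Ici,
    hIci]

theorem setIntegral_Icc_setIntegral_Icc_swap [SecondCountableTopology α] [SFinite μ]
    (hF : IntegrableOn (Function.uncurry F) (Icc a b ×ˢ Icc a b) (μ.prod μ)) :
    ∫ p in Icc a b, ∫ q in Icc a p, F p q ∂μ ∂μ
      = ∫ q in Icc a b, ∫ p in Icc q b, F p q ∂μ ∂μ := by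
  set G := {z : α × α | z.2 ≤ z.1}.indicator (Function.uncurry F)
  calc ∫ p in Icc a b, ∫ q in Icc a p, F p q ∂μ ∂μ
      = ∫ p in Icc a b, ∫ q in Icc a b, G (p, q) ∂μ ∂μ := setIntegral_congr_fun measurableSet_Icc
        fun p hp => (setIntegral_Icc_indicator_le_right hp).symm
    _ = ∫ q in Icc a b, ∫ p in Icc a b, G (p, q) ∂μ ∂μ :=
        integral_integral_swap (integrable_indicator_snd_le_fst hF)
    _ = ∫ q in Icc a b, ∫ p in Icc q b, F p q ∂μ ∂μ := setIntegral_congr_fun measurableSet_Icc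
        fun q hq => setIntegral_Icc_indicator_le_left hq

theorem integrableOn_setIntegral_Icc [SecondCountableTopology α] [SFinite μ]
    (hF : IntegrableOn (Function.uncurry F) (Icc a b ×ˢ Icc a b) (μ.prod μ)) :
    IntegrableOn (fun p => ∫ q in Icc a p, F p q ∂μ) (Icc a b) μ :=
  (integrable_indicator_snd_le_fst hF).integral_prod_left.congr <|
    (ae_restrict_iff' measurableSet_Icc).2
      (.of_forall fun _ hp => setIntegral_Icc_indicator_le_right hp)

end OrderIntervalSwap

lemma setIntegral_Icc_zero_mul_pow {p : ℝ × ℝ} (hp : 0 ≤ p) (n : ℕ) :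
    ∫ q in Icc 0 p, (q.1 * q.2) ^ n = (p.1 * p.2) ^ (n + 1) / (n + 1) ^ 2 := by
  simpa using setIntegral_Icc_mul_sub_pow hp n

theorem nonpos_of_le_mul_setIntegral_Icc {M : ℝ} (hM : 0 ≤ M) {u : ℝ × ℝ → ℝ} {b : ℝ × ℝ}
    (hu : IntegrableOn u (Icc 0 b)) (h : ∀ p ∈ Icc 0 b, u p ≤ M * ∫ q in Icc 0 p, u q) :
    ∀ p ∈ Icc 0 b, u p ≤ 0 := by
  set C := M * ∫ q in Icc 0 b, |u q|
  have hC : ∀ p ∈ Icc 0 b, u p ≤ C := fun p hp => by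
    have hsub : Icc 0 p ⊆ Icc 0 b := Icc_subset_Icc_right hp.2
    refine (h p hp).trans (mul_le_mul_of_nonneg_left ?_ hM)
    exact (integral_mono (hu.mono_set hsub) (hu.mono_set hsub).abs fun q => le_abs_self (u q)).trans
      (setIntegral_mono_set hu.abs (.of_forall fun _ => abs_nonneg _) (.of_forall hsub))
  have hbound : ∀ n : ℕ, ∀ p ∈ Icc 0 b, u p ≤ C * ((M * (p.1 * p.2)) ^ n / (n ! : ℝ) ^ 2) := by
    intro n
    induction n with
    | zero => simpa using hC
    | succ n ih =>
      intro p hp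
      have hsub : Icc 0 p ⊆ Icc 0 b := Icc_subset_Icc_right hp.2
      calc u p ≤ M * ∫ q in Icc 0 p, u q := h p hp
        _ ≤ M * ∫ q in Icc 0 p, C * ((M * (q.1 * q.2)) ^ n / (n ! : ℝ) ^ 2) :=
          mul_le_mul_of_nonneg_left (setIntegral_mono_on (hu.mono_set hsub)
            (Continuous.continuousOn (by fun_prop) |>.integrableOn_compact isCompact_Icc)
            measurableSet_Icc fun q hq => ih q (hsub hq)) hM
        _ = C * ((M * (p.1 * p.2)) ^ (n + 1) / ((n + 1) ! : ℝ) ^ 2) := by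
          simp_rw [mul_pow M, integral_const_mul, integral_div, integral_const_mul,
            setIntegral_Icc_zero_mul_pow hp.1, Nat.factorial_succ]
          push_cast
          field_simp
          ring
  intro p hp
  have hlim : Tendsto (fun n : ℕ => C * ((M * (p.1 * p.2)) ^ n / (n ! : ℝ) ^ 2)) atTop (𝓝 0) := by
    simpa using (summable_pow_div_factorial_sq (M * (p.1 * p.2))).tendsto_atTop_zero.const_mul C
  exact ge_of_tendsto' hlim fun n => hbound n p hp

/-- `u ↦ M ∫_{[0,p]} gronwallKernel M p q * u q dq` is the resolvent of `u ↦ M ∫_{[0,p]} u`. -/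
noncomputable def gronwallKernel (M : ℝ) (p q : ℝ × ℝ) : ℝ :=
  besselClifford (M * ((p.1 - q.1) * (p.2 - q.2)))

lemma continuous_gronwallKernel (M : ℝ) :
    Continuous fun z : (ℝ × ℝ) × (ℝ × ℝ) => gronwallKernel M z.1 z.2 :=
  continuous_besselClifford.comp (by fun_prop)

lemma continuous_gronwallKernel_left (M : ℝ) (p : ℝ × ℝ) : Continuous (gronwallKernel M p) :=
  (continuous_gronwallKernel M).comp (continuous_const.prodMk continuous_id)

lemma integrableOn_gronwallKernel_mul (M : ℝ) {g : ℝ × ℝ → ℝ} {b : ℝ × ℝ}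
    (hg : ContinuousOn g (Icc 0 b)) :
    IntegrableOn (Function.uncurry fun p q => gronwallKernel M p q * g q)
      (Icc 0 b ×ˢ Icc 0 b) (volume.prod volume) := by
  refine ContinuousOn.integrableOn_compact (isCompact_Icc.prod isCompact_Icc) ?_
  exact (continuous_gronwallKernel M).continuousOn.mul
    (hg.comp continuousOn_snd fun z hz => hz.2)

theorem mul_setIntegral_Icc_resolvent (M : ℝ) {g : ℝ × ℝ → ℝ} {p : ℝ × ℝ}
    (hg : ContinuousOn g (Icc 0 p)) :
    M * ∫ r in Icc 0 p, (g r + M * ∫ q in Icc 0 r, gronwallKernel M r q * g q)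
      = M * ∫ q in Icc 0 p, gronwallKernel M p q * g q := by
  have hKg := integrableOn_gronwallKernel_mul M hg
  have hinner : ∀ q ∈ Icc 0 p,
      M * ∫ r in Icc q p, gronwallKernel M r q * g q = (gronwallKernel M p q - 1) * g q := by
    intro q hq
    rw [integral_mul_const, ← mul_assoc]
    unfold gronwallKernel
    rw [mul_setIntegral_Icc_besselClifford M hq.2]
  have hg_int := hg.integrableOn_compact (μ := volume) isCompact_Icc
  calc M * ∫ r in Icc 0 p, (g r + M * ∫ q in Icc 0 r, gronwallKernel M r q * g q)
      = M * ((∫ q in Icc 0 p, g q)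
          + ∫ q in Icc 0 p, M * ∫ r in Icc q p, gronwallKernel M r q * g q) := by
        rw [integral_add hg_int ((integrableOn_setIntegral_Icc hKg).const_mul M),
          integral_const_mul, setIntegral_Icc_setIntegral_Icc_swap hKg, integral_const_mul]
    _ = M * ((∫ q in Icc 0 p, g q) + ∫ q in Icc 0 p, (gronwallKernel M p q - 1) * g q) := by
        rw [setIntegral_congr_fun measurableSet_Icc hinner]
    _ = M * ∫ q in Icc 0 p, gronwallKernel M p q * g q := by
        rw [← integral_add hg_int]
        · simp only [sub_mul, one_mul, add_sub_cancel]
        · exact (((continuous_gronwallKernel_left M _).sub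
            continuous_const).continuousOn.mul hg).integrableOn_compact isCompact_Icc

theorem le_add_mul_setIntegral_gronwallKernel {M : ℝ} (hM : 0 ≤ M) {f g : ℝ × ℝ → ℝ}
    {b : ℝ × ℝ} (hf : IntegrableOn f (Icc 0 b)) (hg : ContinuousOn g (Icc 0 b))
    (h : ∀ p ∈ Icc 0 b, f p ≤ g p + M * ∫ q in Icc 0 p, f q) :
    ∀ p ∈ Icc 0 b, f p ≤ g p + M * ∫ q in Icc 0 p, gronwallKernel M p q * g q := by
  set w := fun p => g p + M * ∫ q in Icc 0 p, gronwallKernel M p q * g q with hw_def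
  have hw : IntegrableOn w (Icc 0 b) := (hg.integrableOn_compact isCompact_Icc).add
    ((integrableOn_setIntegral_Icc (integrableOn_gronwallKernel_mul M hg)).const_mul M)
  have hsub : ∀ p ∈ Icc 0 b, f p - w p ≤ M * ∫ q in Icc 0 p, (f q - w q) := by
    intro p hp
    have hsub : Icc 0 p ⊆ Icc 0 b := Icc_subset_Icc_right hp.2
    rw [integral_sub (hf.mono_set hsub) (hw.mono_set hsub), mul_sub, hw_def,
      mul_setIntegral_Icc_resolvent M (hg.mono hsub)]
    linarith [h p hp]
  intro p hp
  linarith [nonpos_of_le_mul_setIntegral_Icc (u := fun p => f p - w p) hM (hf.sub hw) hsub p hp]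

lemma setIntegral_gronwallKernel_le {M : ℝ} (hM : 0 ≤ M) {p : ℝ × ℝ} (hp : p ∈ Icc 0 1) :
    ∫ q in Icc 0 p, gronwallKernel M p q ≤ besselClifford M := by
  obtain ⟨⟨hp1, hp2⟩, hp1', hp2'⟩ := hp
  simp only [Prod.fst_zero, Prod.snd_zero, Prod.fst_one, Prod.snd_one] at hp1 hp2 hp1' hp2'
  have hle : ∀ q ∈ Icc 0 p, gronwallKernel M p q ≤ besselClifford M := fun q hq => by
    have h1 := sub_nonneg.2 hq.2.1; have h2 := sub_nonneg.2 hq.2.2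
    have hq1 : 0 ≤ q.1 := hq.1.1; have hq2 : 0 ≤ q.2 := hq.1.2
    refine monotoneOn_besselClifford (by positivity : 0 ≤ M * _) hM ?_
    exact mul_le_of_le_one_right hM (mul_le_one₀ (by linarith) h2 (by linarith))
  have hvol : volume.real (Icc 0 p) = p.1 * p.2 := by
    rw [Icc_prod_eq, Measure.volume_eq_prod, measureReal_prod_prod]
    simp [hp1, hp2]
  calc ∫ q in Icc 0 p, gronwallKernel M p q
      ≤ ∫ q in Icc 0 p, besselClifford M :=
        setIntegral_mono_on
          ((continuous_gronwallKernel_left M p).continuousOn.integrableOn_compact isCompact_Icc)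
          (integrableOn_const isCompact_Icc.measure_lt_top.ne) measurableSet_Icc hle
    _ = p.1 * p.2 * besselClifford M := by rw [setIntegral_const, hvol, smul_eq_mul]
    _ ≤ besselClifford M := mul_le_of_le_one_left (besselClifford_nonneg hM)
        (mul_le_one₀ hp1' hp2 hp2')

theorem le_mul_one_add_mul_besselClifford {M K : ℝ} (hM : 0 ≤ M) (hK : 0 ≤ K)
    {f : ℝ × ℝ → ℝ} (hf : IntegrableOn f (Icc 0 1))
    (h : ∀ p ∈ Icc 0 1, f p ≤ K + M * ∫ q in Icc 0 p, f q) :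
    ∀ p ∈ Icc 0 1, f p ≤ K * (1 + M * besselClifford M) := fun p hp =>
  calc f p ≤ K + M * ∫ q in Icc 0 p, gronwallKernel M p q * K :=
        le_add_mul_setIntegral_gronwallKernel hM hf continuousOn_const h p hp
    _ ≤ K + M * (besselClifford M * K) := by
        rw [integral_mul_const]
        gcongr
        exact setIntegral_gronwallKernel_le hM hp
    _ = K * (1 + M * besselClifford M) := by ring

lemma setIntegral_gronwallKernel_mul_eq {M : ℝ} (hM : 0 ≤ M) {g : ℝ → ℝ → ℝ} {s t : ℝ}
    (hs : 0 ≤ s) (ht : 0 ≤ t) (hg : ContinuousOn (fun p : ℝ × ℝ => g p.1 p.2) (Icc 0 (s, t))) :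
    ∫ q in Icc 0 (s, t), gronwallKernel M (s, t) q * g q.1 q.2
      = ∫ ξ in (0 : ℝ)..s, ∫ ζ in (0 : ℝ)..t,
          g ξ ζ * besselI0 (2 * Real.sqrt (M * (s - ξ) * (t - ζ))) := by
  have heq : EqOn (fun q => gronwallKernel M (s, t) q * g q.1 q.2)
      (fun q => g q.1 q.2 * besselI0 (2 * √(M * (s - q.1) * (t - q.2)))) (Icc 0 (s, t)) :=
    fun q hq => by
      have h1 := sub_nonneg.2 hq.2.1; have h2 := sub_nonneg.2 hq.2.2
      dsimp only at h1 h2 ⊢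
      rw [gronwallKernel, besselI0_two_mul_sqrt (by positivity), mul_comm, mul_assoc]
  rw [setIntegral_congr_fun measurableSet_Icc heq, setIntegral_Icc_eq_intervalIntegral
    (show (0 : ℝ × ℝ) ≤ (s, t) from ⟨hs, ht⟩) ?_]
  · rfl
  · exact ((continuous_gronwallKernel_left M _).continuousOn.mul
      hg |>.integrableOn_compact isCompact_Icc).congr_fun heq measurableSet_Icc

theorem gronwall_plane_general (M : ℝ) (hM : 0 ≤ M) (f g : ℝ → ℝ → ℝ)
    (hf : ContinuousOn (fun p : ℝ × ℝ => f p.1 p.2)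
      (Set.Icc (0 : ℝ) 1 ×ˢ Set.Icc (0 : ℝ) 1))
    (hg : ContinuousOn (fun p : ℝ × ℝ => g p.1 p.2)
      (Set.Icc (0 : ℝ) 1 ×ˢ Set.Icc (0 : ℝ) 1))
    (hineq : ∀ s ∈ Set.Icc (0 : ℝ) 1, ∀ t ∈ Set.Icc (0 : ℝ) 1,
      f s t ≤ g s t + M * ∫ ξ in (0 : ℝ)..s, ∫ ζ in (0 : ℝ)..t, f ξ ζ) :
    (∀ s ∈ Set.Icc (0 : ℝ) 1, ∀ t ∈ Set.Icc (0 : ℝ) 1,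
      f s t ≤ g s t + M * ∫ ξ in (0 : ℝ)..s, ∫ ζ in (0 : ℝ)..t,
        g ξ ζ * besselI0 (2 * Real.sqrt (M * (s - ξ) * (t - ζ)))) ∧
    (∀ K : ℝ, 0 ≤ K → (∀ s ∈ Set.Icc (0 : ℝ) 1, ∀ t ∈ Set.Icc (0 : ℝ) 1, g s t = K) →
      ∀ s ∈ Set.Icc (0 : ℝ) 1, ∀ t ∈ Set.Icc (0 : ℝ) 1,
        f s t ≤ K * (1 + M * besselI0 (2 * Real.sqrt M))) := by
  have hsq : Icc (0 : ℝ × ℝ) 1 = Icc (0 : ℝ) 1 ×ˢ Icc (0 : ℝ) 1 := Icc_prod_eq 0 1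
  have hmem : ∀ p : ℝ × ℝ, p ∈ Icc (0 : ℝ × ℝ) 1 ↔ p.1 ∈ Icc (0 : ℝ) 1 ∧ p.2 ∈ Icc (0 : ℝ) 1 :=
    fun p => by rw [hsq, mem_prod]
  rw [← hsq] at hf hg
  have hbox : ∀ p ∈ Icc (0 : ℝ × ℝ) 1, Icc 0 p ⊆ Icc 0 1 := fun p hp => Icc_subset_Icc_right hp.2
  have hf_int := hf.integrableOn_compact (μ := volume) isCompact_Icc
  have h : ∀ p ∈ Icc (0 : ℝ × ℝ) 1,
      f p.1 p.2 ≤ g p.1 p.2 + M * ∫ q in Icc 0 p, f q.1 q.2 := fun p hp => by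
    rw [setIntegral_Icc_eq_intervalIntegral hp.1 (hf_int.mono_set (hbox p hp))]
    exact hineq p.1 ((hmem p).1 hp).1 p.2 ((hmem p).1 hp).2
  refine ⟨fun s hs t ht => ?_, fun K hK hgK s hs t ht => ?_⟩
  · have hst := (hmem (s, t)).2 ⟨hs, ht⟩
    rw [← setIntegral_gronwallKernel_mul_eq hM hs.1 ht.1 (hg.mono (hbox _ hst))]
    exact le_add_mul_setIntegral_gronwallKernel hM hf_int hg h (s, t) hst
  · rw [besselI0_two_mul_sqrt hM]
    refine le_mul_one_add_mul_besselClifford hM hK hf_int (fun p hp => ?_) (s, t)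
      ((hmem (s, t)).2 ⟨hs, ht⟩)
    simpa only [hgK p.1 ((hmem p).1 hp).1 p.2 ((hmem p).1 hp).2] using h p hp

theorem gronwall_plane (M : ℝ) (hM : 0 ≤ M) (f g : ℝ → ℝ → ℝ)
    (hf : ContinuousOn (fun p : ℝ × ℝ => f p.1 p.2)
      (Set.Icc (0 : ℝ) 1 ×ˢ Set.Icc (0 : ℝ) 1))
    (hg : ContinuousOn (fun p : ℝ × ℝ => g p.1 p.2)
      (Set.Icc (0 : ℝ) 1 ×ˢ Set.Icc (0 : ℝ) 1))
    (hfpos : ∀ s ∈ Set.Icc (0 : ℝ) 1, ∀ t ∈ Set.Icc (0 : ℝ) 1, 0 ≤ f s t)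
    (hineq : ∀ s ∈ Set.Icc (0 : ℝ) 1, ∀ t ∈ Set.Icc (0 : ℝ) 1,
      f s t ≤ g s t + M * ∫ ξ in (0 : ℝ)..s, ∫ ζ in (0 : ℝ)..t, f ξ ζ) :
    (∀ s ∈ Set.Icc (0 : ℝ) 1, ∀ t ∈ Set.Icc (0 : ℝ) 1,
      f s t ≤ g s t + M * ∫ ξ in (0 : ℝ)..s, ∫ ζ in (0 : ℝ)..t,
        g ξ ζ * besselI0 (2 * Real.sqrt (M * (s - ξ) * (t - ζ)))) ∧
    (∀ K : ℝ, 0 ≤ K → (∀ s ∈ Set.Icc (0 : ℝ) 1, ∀ t ∈ Set.Icc (0 : ℝ) 1, g s t = K) →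
      ∀ s ∈ Set.Icc (0 : ℝ) 1, ∀ t ∈ Set.Icc (0 : ℝ) 1,
        f s t ≤ K * (1 + M * besselI0 (2 * Real.sqrt M))) :=
  gronwall_plane_general M hM f g hf hg hineq
end

section
/- Let f : [0,1]² → ℝ be continuous and nonnegative, M ≥ 0 and K ≥ 0, and suppose f(s,t) ≤ K + M ∫₀^s ∫₀^t f(ξ,ζ) dζ dξ for all (s,t) ∈ [0,1]². Then f(s,t) ≤ K · ∑_{k=0}^∞ M^k (st)^k/(k!)² for all (s,t) ∈ [0,1]²; in particular f is bounded by K·I₀(2√M). -/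
open intervalIntegral Set

lemma clamp_mem (x : ℝ) : max 0 (min x 1) ∈ Set.Icc (0:ℝ) 1 :=
  ⟨le_max_left _ _, max_le (by norm_num) (min_le_right _ _)⟩

lemma clamp_eq {x : ℝ} (hx : x ∈ Set.Icc (0:ℝ) 1) : max 0 (min x 1) = x := by
  rw [min_eq_left hx.2, max_eq_right hx.1]

theorem gronwall_plane_const (M K : ℝ) (hM : 0 ≤ M) (hK : 0 ≤ K) (f : ℝ → ℝ → ℝ)
    (hf : ContinuousOn (fun p : ℝ × ℝ => f p.1 p.2)
      (Set.Icc (0 : ℝ) 1 ×ˢ Set.Icc (0 : ℝ) 1))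
    (hfpos : ∀ s ∈ Set.Icc (0 : ℝ) 1, ∀ t ∈ Set.Icc (0 : ℝ) 1, 0 ≤ f s t)
    (hineq : ∀ s ∈ Set.Icc (0 : ℝ) 1, ∀ t ∈ Set.Icc (0 : ℝ) 1,
      f s t ≤ K + M * ∫ ξ in (0 : ℝ)..s, ∫ ζ in (0 : ℝ)..t, f ξ ζ) :
    ∀ s ∈ Set.Icc (0 : ℝ) 1, ∀ t ∈ Set.Icc (0 : ℝ) 1,
      f s t ≤ K * ∑' k : ℕ, M ^ k * (s * t) ^ k / ((k.factorial : ℝ)) ^ 2 ∧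
      f s t ≤ K * besselI0 (2 * Real.sqrt M) := by
  -- Extend f continuously to the whole plane by clamping coordinates.
  set cl : ℝ → ℝ := fun x => max 0 (min x 1) with hcl
  set F : ℝ → ℝ → ℝ := fun a b => f (cl a) (cl b) with hF
  have hclc : Continuous cl := by rw [hcl]; fun_prop
  have hFc : Continuous (fun p : ℝ × ℝ => F p.1 p.2) := by
    have : (fun p : ℝ × ℝ => F p.1 p.2)
        = (fun p : ℝ × ℝ => f p.1 p.2) ∘ (fun p : ℝ × ℝ => (cl p.1, cl p.2)) := rfl
    rw [this]
    exact hf.comp_continuous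
      ((hclc.comp continuous_fst).prodMk (hclc.comp continuous_snd))
      (fun p => ⟨clamp_mem _, clamp_mem _⟩)
  have hFeq : ∀ s ∈ Set.Icc (0:ℝ) 1, ∀ t ∈ Set.Icc (0:ℝ) 1, F s t = f s t := by
    intro s hs t ht
    simp only [hF, hcl]
    rw [clamp_eq hs, clamp_eq ht]
  have hFpos : ∀ a b : ℝ, 0 ≤ F a b := fun a b => hfpos _ (clamp_mem a) _ (clamp_mem b)
  -- interval integrals of f equal those of F on the square
  have hintcong : ∀ s ∈ Set.Icc (0:ℝ) 1, ∀ t ∈ Set.Icc (0:ℝ) 1,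
      (∫ ξ in (0:ℝ)..s, ∫ ζ in (0:ℝ)..t, f ξ ζ)
        = ∫ ξ in (0:ℝ)..s, ∫ ζ in (0:ℝ)..t, F ξ ζ := by
    intro s hs t ht
    apply intervalIntegral.integral_congr
    intro ξ hξ
    rw [Set.uIcc_of_le hs.1] at hξ
    have hξ1 : ξ ∈ Set.Icc (0:ℝ) 1 := ⟨hξ.1, hξ.2.trans hs.2⟩
    apply intervalIntegral.integral_congr
    intro ζ hζ
    rw [Set.uIcc_of_le ht.1] at hζ
    exact (hFeq _ hξ1 _ ⟨hζ.1, hζ.2.trans ht.2⟩).symm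
  have hineqF : ∀ s ∈ Set.Icc (0:ℝ) 1, ∀ t ∈ Set.Icc (0:ℝ) 1,
      F s t ≤ K + M * ∫ ξ in (0:ℝ)..s, ∫ ζ in (0:ℝ)..t, F ξ ζ := by
    intro s hs t ht
    rw [hFeq s hs t ht, ← hintcong s hs t ht]
    exact hineq s hs t ht
  -- A bound for F on the square
  obtain ⟨C0, hC0⟩ : ∃ C, ∀ a b : ℝ, a ∈ Set.Icc (0:ℝ) 1 → b ∈ Set.Icc (0:ℝ) 1 → F a b ≤ C := by
    obtain ⟨C, hC⟩ := (isCompact_Icc.prod isCompact_Icc).exists_bound_of_continuousOn hFc.continuousOn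
    exact ⟨C, fun a b ha hb => (le_abs_self _).trans
      (by simpa [Real.norm_eq_abs] using hC (a,b) ⟨ha, hb⟩)⟩
  set C : ℝ := max C0 0 with hCdef
  have hCnn : 0 ≤ C := le_max_right _ _
  have hC : ∀ a ∈ Set.Icc (0:ℝ) 1, ∀ b ∈ Set.Icc (0:ℝ) 1, F a b ≤ C :=
    fun a ha b hb => (hC0 a b ha hb).trans (le_max_left _ _)
  -- the iterated bound
  set Φ : ℕ → ℝ → ℝ → ℝ := fun n a b =>
    K * ∑ k ∈ Finset.range n, M ^ k * (a * b) ^ k / ((k.factorial : ℝ))^2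
      + C * (M ^ n * (a * b) ^ n / ((n.factorial : ℝ))^2) with hΦ
  have key : ∀ n : ℕ, ∀ s ∈ Set.Icc (0:ℝ) 1, ∀ t ∈ Set.Icc (0:ℝ) 1, F s t ≤ Φ n s t := by
    intro n
    induction n with
    | zero => intro s hs t ht; simpa [hΦ] using hC s hs t ht
    | succ n ih =>
      intro s hs t ht
      have step1 : F s t ≤ K + M * ∫ ξ in (0:ℝ)..s, ∫ ζ in (0:ℝ)..t, F ξ ζ :=
        hineqF s hs t ht
      -- bound the double integral of F by that of Φ n
      have mono : (∫ ξ in (0:ℝ)..s, ∫ ζ in (0:ℝ)..t, F ξ ζ)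
          ≤ ∫ ξ in (0:ℝ)..s, ∫ ζ in (0:ℝ)..t, Φ n ξ ζ := by
        have hΦcont : Continuous (fun p : ℝ × ℝ => Φ n p.1 p.2) := by
          apply Continuous.add
          · exact continuous_const.mul (continuous_finset_sum _ (fun k _ => by fun_prop))
          · fun_prop
        apply intervalIntegral.integral_mono_on hs.1
        · exact (continuous_parametric_intervalIntegral_of_continuous'
            (μ := MeasureTheory.volume) (f := fun ξ ζ => F ξ ζ) hFc 0 t)
            |>.intervalIntegrable _ _
        · exact (continuous_parametric_intervalIntegral_of_continuous'
            (μ := MeasureTheory.volume) (f := fun ξ ζ => Φ n ξ ζ) hΦcont 0 t)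
            |>.intervalIntegrable _ _
        · intro ξ hξ
          have hξ1 : ξ ∈ Set.Icc (0:ℝ) 1 := ⟨hξ.1, hξ.2.trans hs.2⟩
          apply intervalIntegral.integral_mono_on ht.1
          · exact ((hFc.comp (by fun_prop : Continuous fun ζ : ℝ => (ξ, ζ))).intervalIntegrable _ _)
          · exact ((hΦcont.comp (by fun_prop : Continuous fun ζ : ℝ => (ξ, ζ))).intervalIntegrable _ _)
          · intro ζ hζ
            exact ih ξ hξ1 ζ ⟨hζ.1, hζ.2.trans ht.2⟩
      -- compute the double integral of Φ n
      have comp : (∫ ξ in (0:ℝ)..s, ∫ ζ in (0:ℝ)..t, Φ n ξ ζ)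
          = K * ∑ k ∈ Finset.range n,
              M ^ k * (s * t) ^ (k+1) / (((k.factorial : ℝ))^2 * ((k:ℝ)+1)^2)
            + C * (M ^ n * (s * t) ^ (n+1) / (((n.factorial : ℝ))^2 * ((n:ℝ)+1)^2)) := by
        have inner : ∀ ξ : ℝ, (∫ ζ in (0:ℝ)..t, Φ n ξ ζ)
            = K * ∑ k ∈ Finset.range n,
                M ^ k * (ξ ^ k * (t ^ (k+1)/((k:ℝ)+1))) / ((k.factorial : ℝ))^2
              + C * (M ^ n * (ξ ^ n * (t ^ (n+1)/((n:ℝ)+1))) / ((n.factorial : ℝ))^2) := by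
          intro ξ
          have e1 : ∀ k : ℕ, (∫ ζ in (0:ℝ)..t, M ^ k * (ξ * ζ) ^ k / ((k.factorial : ℝ))^2)
              = M ^ k * (ξ ^ k * (t ^ (k+1)/((k:ℝ)+1))) / ((k.factorial : ℝ))^2 := by
            intro k
            have : (fun ζ : ℝ => M ^ k * (ξ * ζ) ^ k / ((k.factorial : ℝ))^2)
                = fun ζ : ℝ => (M ^ k * ξ ^ k / ((k.factorial : ℝ))^2) * ζ ^ k := by
              funext ζ; ring
            rw [this, intervalIntegral.integral_const_mul, integral_pow]
            ring
          rw [hΦ]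
          simp only
          rw [intervalIntegral.integral_add, intervalIntegral.integral_const_mul,
            intervalIntegral.integral_const_mul,
            intervalIntegral.integral_finset_sum]
          · congr 2
            · exact Finset.sum_congr rfl (fun k _ => e1 k)
            · exact e1 n
          · intro k _
            exact (by fun_prop : Continuous fun ζ : ℝ => M ^ k * (ξ * ζ) ^ k / ((k.factorial : ℝ))^2).intervalIntegrable _ _
          · exact (by fun_prop : Continuous fun ζ : ℝ => K * ∑ k ∈ Finset.range n, M ^ k * (ξ * ζ) ^ k / ((k.factorial : ℝ))^2).intervalIntegrable _ _
          · exact (by fun_prop : Continuous fun ζ : ℝ => C * (M ^ n * (ξ * ζ) ^ n / ((n.factorial : ℝ))^2)).intervalIntegrable _ _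
        simp only [inner]
        have e2 : ∀ k : ℕ, (∫ ξ in (0:ℝ)..s,
              M ^ k * (ξ ^ k * (t ^ (k+1)/((k:ℝ)+1))) / ((k.factorial : ℝ))^2)
            = M ^ k * (s * t) ^ (k+1) / (((k.factorial : ℝ))^2 * ((k:ℝ)+1)^2) := by
          intro k
          have : (fun ξ : ℝ => M ^ k * (ξ ^ k * (t ^ (k+1)/((k:ℝ)+1))) / ((k.factorial : ℝ))^2)
              = fun ξ : ℝ => (M ^ k * (t ^ (k+1)/((k:ℝ)+1)) / ((k.factorial : ℝ))^2) * ξ ^ k := by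
            funext ξ; ring
          rw [this, intervalIntegral.integral_const_mul, integral_pow, mul_pow]
          have hk : ((k:ℝ)+1) ≠ 0 := by positivity
          field_simp
          ring
        rw [intervalIntegral.integral_add, intervalIntegral.integral_const_mul,
          intervalIntegral.integral_const_mul, intervalIntegral.integral_finset_sum]
        · congr 2
          · exact Finset.sum_congr rfl (fun k _ => e2 k)
          · exact e2 n
        · intro k _
          exact (by fun_prop : Continuous fun ξ : ℝ => M ^ k * (ξ ^ k * (t ^ (k+1)/((k:ℝ)+1))) / ((k.factorial : ℝ))^2).intervalIntegrable _ _
        · exact (by fun_prop : Continuous fun ξ : ℝ => K * ∑ k ∈ Finset.range n, M ^ k * (ξ ^ k * (t ^ (k+1)/((k:ℝ)+1))) / ((k.factorial : ℝ))^2).intervalIntegrable _ _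
        · exact (by fun_prop : Continuous fun ξ : ℝ => C * (M ^ n * (ξ ^ n * (t ^ (n+1)/((n:ℝ)+1))) / ((n.factorial : ℝ))^2)).intervalIntegrable _ _
      have hterm : ∀ k : ℕ,
          M * (M ^ k * (s * t) ^ (k+1) / (((k.factorial : ℝ))^2 * ((k:ℝ)+1)^2))
            = M ^ (k+1) * (s * t) ^ (k+1) / (((k+1).factorial : ℝ))^2 := by
        intro k
        rw [Nat.factorial_succ]
        have hk : ((k:ℝ)+1) ≠ 0 := by positivity
        have hkf : ((k.factorial : ℝ)) ≠ 0 := Nat.cast_ne_zero.2 k.factorial_ne_zero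
        push_cast
        field_simp
        ring
      have final : K + M * (∫ ξ in (0:ℝ)..s, ∫ ζ in (0:ℝ)..t, Φ n ξ ζ) = Φ (n+1) s t := by
        rw [comp, hΦ]
        simp only
        rw [Finset.sum_range_succ' (fun k => M ^ k * (s * t) ^ k / ((k.factorial : ℝ))^2) n]
        have e : M * ∑ k ∈ Finset.range n,
            M ^ k * (s * t) ^ (k+1) / (((k.factorial : ℝ))^2 * ((k:ℝ)+1)^2)
            = ∑ k ∈ Finset.range n, M ^ (k+1) * (s * t) ^ (k+1) / (((k+1).factorial : ℝ))^2 := by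
          rw [Finset.mul_sum]
          exact Finset.sum_congr rfl fun k _ => hterm k
        simp only [pow_zero, Nat.factorial_zero, Nat.cast_one, one_pow, mul_one, div_one, one_mul]
        linear_combination K * e + C * hterm n
      calc F s t ≤ K + M * ∫ ξ in (0:ℝ)..s, ∫ ζ in (0:ℝ)..t, F ξ ζ := step1
        _ ≤ K + M * ∫ ξ in (0:ℝ)..s, ∫ ζ in (0:ℝ)..t, Φ n ξ ζ := by
            have := mul_le_mul_of_nonneg_left mono hM; linarith
        _ = Φ (n+1) s t := final
  -- pass to the limit
  intro s hs t ht
  have hst0 : 0 ≤ s * t := mul_nonneg hs.1 ht.1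
  have hst1 : s * t ≤ 1 := mul_le_one₀ hs.2 ht.1 ht.2
  have hfact2 : ∀ k : ℕ, (k.factorial : ℝ) ≤ ((k.factorial : ℝ))^2 := by
    intro k
    have h1 : (1:ℝ) ≤ (k.factorial : ℝ) := by exact_mod_cast k.factorial_pos
    nlinarith
  have hfactpos : ∀ k : ℕ, (0:ℝ) < (k.factorial : ℝ) := fun k => by
    exact_mod_cast k.factorial_pos
  have hsummable : Summable (fun k : ℕ => M ^ k * (s * t) ^ k / ((k.factorial : ℝ))^2) := by
    apply Summable.of_nonneg_of_le (fun k => by positivity)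
      (fun k => ?_) (Real.summable_pow_div_factorial M)
    have h1 : (s*t)^k ≤ 1 := pow_le_one₀ hst0 hst1
    calc M ^ k * (s * t) ^ k / ((k.factorial : ℝ))^2
        ≤ M ^ k / ((k.factorial : ℝ))^2 := by
          apply div_le_div_of_nonneg_right ?_ (by positivity)
          exact mul_le_of_le_one_right (pow_nonneg hM k) h1
      _ ≤ M ^ k / (k.factorial : ℝ) :=
          div_le_div_of_nonneg_left (pow_nonneg hM k) (hfactpos k) (hfact2 k)
  have hbesselsum : Summable (fun k : ℕ => M ^ k / ((k.factorial : ℝ))^2) := by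
    apply Summable.of_nonneg_of_le (fun k => by positivity)
      (fun k => div_le_div_of_nonneg_left (pow_nonneg hM k) (hfactpos k) (hfact2 k))
      (Real.summable_pow_div_factorial M)
  have hFle : F s t ≤ K * ∑' k : ℕ, M ^ k * (s * t) ^ k / ((k.factorial : ℝ))^2 := by
    have hlim : Filter.Tendsto (fun n => Φ n s t) Filter.atTop
        (nhds (K * ∑' k : ℕ, M ^ k * (s * t) ^ k / ((k.factorial : ℝ))^2 + C * 0)) := by
      apply Filter.Tendsto.add
      · exact (hsummable.hasSum.tendsto_sum_nat.const_mul K)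
      · apply Filter.Tendsto.const_mul
        have := hsummable.tendsto_atTop_zero
        simpa using this
    rw [mul_zero, add_zero] at hlim
    exact ge_of_tendsto hlim (Filter.Eventually.of_forall (fun n => key n s hs t ht))
  rw [← hFeq s hs t ht]
  refine ⟨hFle, hFle.trans ?_⟩
  apply mul_le_mul_of_nonneg_left _ hK
  unfold besselI0
  have hpow : ∀ k : ℕ, ((2 * Real.sqrt M / 2) ^ (2*k) : ℝ) = M ^ k := by
    intro k
    have h2 : (2:ℝ) * Real.sqrt M / 2 = Real.sqrt M := by ring
    rw [h2, pow_mul, Real.sq_sqrt hM]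
  refine Summable.tsum_le_tsum (fun k => ?_) hsummable ?_
  · rw [hpow k]
    apply div_le_div_of_nonneg_right ?_ (by positivity)
    exact mul_le_of_le_one_right (pow_nonneg hM k) (pow_le_one₀ hst0 hst1)
  · exact hbesselsum.congr fun k => by rw [hpow k]
end
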